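/- arXiv:0810.2346 — 4 statements merged into one kernel-verified Lean document; each statement's English description precedes it below -/
import Mathlib

section
/- For a finitely generated torsion module M over the PID Λ = ℚ[t,t⁻¹], there is a (non-natural) Λ-module isomorphism between M and Hom_Λ(M, Q(Λ)/Λ), where Q(Λ) is the field of fractions of Λ. -/
/-!
By the structure theorem, `M ≅ ⨁ R ⧸ (pᵢ ^ eᵢ)` with finitely many summands, and `Hom(-, K/R)`
turns a finite direct sum into a product, so it suffices to treat a cyclic module `R ⧸ (a)` with
`a ≠ 0`. Maps out of `R ⧸ (a)` are determined by the image of `1`, an element of the `a`-torsion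
`(K/R)[a]`, and `x ↦ [x / a]` identifies `R ⧸ (a)` with `(K/R)[a]`.
-/

/-- `Λ = ℚ[t,t⁻¹]`, the ring of rational Laurent polynomials (a PID). -/
abbrev Λ : Type := LaurentPolynomial ℚ

/-- The `Λ`-module `Q(Λ)/Λ`, the field of fractions of `Λ` modulo `Λ`. -/
abbrev QLamModLam : Type :=
  FractionRing Λ ⧸ LinearMap.range (Algebra.linearMap Λ (FractionRing Λ))

theorem IsLocalization.isPrincipalIdealRing {R S : Type*} [CommSemiring R] [CommSemiring S]
    [Algebra R S] (M : Submonoid R) [IsLocalization M S] [IsPrincipalIdealRing R] :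
    IsPrincipalIdealRing S :=
  ⟨fun J => map_under M S J ▸ (IsPrincipalIdealRing.principal _).map_ringHom _⟩

open LaurentPolynomial Polynomial in
instance LaurentPolynomial.isPrincipalIdealRing {K : Type*} [Field K] :
    IsPrincipalIdealRing K[T;T⁻¹] :=
  IsLocalization.isPrincipalIdealRing (Submonoid.powers (X : K[X]))

namespace Submodule

variable {R N : Type*} [CommRing R] [AddCommGroup N] [Module R N]

noncomputable def quotSpanSingletonHomEquivTorsionBy (a : R) :
    ((R ⧸ R ∙ a) →ₗ[R] N) ≃ₗ[R] torsionBy R N a where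
  toFun f := ⟨f (Quotient.mk 1), by
    rw [mem_torsionBy_iff, ← map_smul, ← Quotient.mk_smul, smul_eq_mul, mul_one,
      (Quotient.mk_eq_zero _).2 (mem_span_singleton_self a), map_zero]⟩
  invFun n := liftQSpanSingleton a (LinearMap.toSpanSingleton R N n) n.2
  map_add' _ _ := rfl
  map_smul' _ _ := rfl
  left_inv f := linearMap_qext _ <| LinearMap.ext_ring <| one_smul R _
  right_inv n := Subtype.ext <| one_smul R _

end Submodule

section FractionQuotient

open Submodule

variable {R : Type*} [CommRing R] (K : Type*) [Field K] [Algebra R K] [IsFractionRing R K]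

local notation "Q" => K ⧸ LinearMap.range (Algebra.linearMap R K)

theorem smul_inv_algebraMap_mem_range_iff {a : R} (ha : a ≠ 0) (x : R) :
    x • (algebraMap R K a)⁻¹ ∈ LinearMap.range (Algebra.linearMap R K) ↔ x ∈ R ∙ a := by
  have ha' : algebraMap R K a ≠ 0 := (map_ne_zero_iff _ (IsFractionRing.injective R K)).2 ha
  simp only [LinearMap.mem_range, Algebra.linearMap_apply, mem_span_singleton, smul_eq_mul,
    Algebra.smul_def, eq_mul_inv_iff_mul_eq₀ ha', ← map_mul, (IsFractionRing.injective R K).eq_iff]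

noncomputable def mkDivTorsionBy (a : R) : R →ₗ[R] torsionBy R Q a :=
  ((mkQ _).comp (LinearMap.toSpanSingleton R K (algebraMap R K a)⁻¹)).codRestrict _ fun x => by
    rcases eq_or_ne a 0 with rfl | ha
    · simp
    rw [LinearMap.comp_apply, mem_torsionBy_iff, ← map_smul, mkQ_apply, Quotient.mk_eq_zero,
      LinearMap.toSpanSingleton_apply, smul_smul, smul_inv_algebraMap_mem_range_iff K ha]
    exact mem_span_singleton.2 ⟨x, mul_comm x a⟩

theorem ker_mkDivTorsionBy {a : R} (ha : a ≠ 0) : LinearMap.ker (mkDivTorsionBy K a) = R ∙ a := by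
  ext x
  rw [mkDivTorsionBy, LinearMap.ker_codRestrict, LinearMap.mem_ker, LinearMap.comp_apply,
    mkQ_apply, Quotient.mk_eq_zero, LinearMap.toSpanSingleton_apply,
    smul_inv_algebraMap_mem_range_iff K ha]

theorem mkDivTorsionBy_surjective {a : R} (ha : a ≠ 0) :
    Function.Surjective (mkDivTorsionBy K a) := by
  rintro ⟨q, hq⟩
  obtain ⟨k, rfl⟩ := Submodule.Quotient.mk_surjective _ q
  obtain ⟨r, hr⟩ : a • k ∈ LinearMap.range (Algebra.linearMap R K) :=
    (Quotient.mk_eq_zero _).1 <| by rw [Quotient.mk_smul]; exact (mem_torsionBy_iff _ _).1 hq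
  have ha' : algebraMap R K a ≠ 0 := (map_ne_zero_iff _ (IsFractionRing.injective R K)).2 ha
  refine ⟨r, Subtype.ext <| congrArg Submodule.Quotient.mk ?_⟩
  rw [LinearMap.toSpanSingleton_apply, Algebra.smul_def, ← Algebra.linearMap_apply, hr,
    Algebra.smul_def, mul_comm, inv_mul_cancel_left₀ ha']

noncomputable def quotSpanSingletonEquivHom {a : R} (ha : a ≠ 0) :
    (R ⧸ R ∙ a) ≃ₗ[R] ((R ⧸ R ∙ a) →ₗ[R] Q) :=
  quotEquivOfEq _ _ (ker_mkDivTorsionBy K ha).symm ≪≫ₗ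
    (mkDivTorsionBy K a).quotKerEquivOfSurjective (mkDivTorsionBy_surjective K ha) ≪≫ₗ
    (quotSpanSingletonHomEquivTorsionBy a).symm

theorem Module.IsTorsion.nonempty_linearEquiv_hom_fractionField_quotient [IsDomain R]
    [IsPrincipalIdealRing R] {M : Type*} [AddCommGroup M] [Module R M] [Module.Finite R M]
    (hM : Module.IsTorsion R M) : Nonempty (M ≃ₗ[R] (M →ₗ[R] Q)) := by
  classical
  obtain ⟨ι, _, p, hp, e, ⟨f⟩⟩ := Module.equiv_directSum_of_isTorsion hM
  let g : M ≃ₗ[R] Π i, R ⧸ R ∙ p i ^ e i := f ≪≫ₗ DirectSum.linearEquivFunOnFintype R ι _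
  exact ⟨g ≪≫ₗ LinearEquiv.piCongrRight
      (fun i => quotSpanSingletonEquivHom K (pow_ne_zero _ (hp i).ne_zero)) ≪≫ₗ
    LinearMap.lsum R _ R ≪≫ₗ g.symm.arrowCongr (.refl R Q)⟩

end FractionQuotient

/-- For a finitely generated torsion module `M` over the PID `Λ = ℚ[t,t⁻¹]`, there is a
(non-natural) `Λ`-module isomorphism between `M` and `Hom_Λ(M, Q(Λ)/Λ)`. -/
theorem exists_linearEquiv_hom_fractionField_quotient
    (M : Type) [AddCommGroup M] [Module Λ M] [Module.Finite Λ M]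
    (hM : Module.IsTorsion Λ M) :
    Nonempty (M ≃ₗ[Λ] (M →ₗ[Λ] QLamModLam)) :=
  hM.nonempty_linearEquiv_hom_fractionField_quotient (FractionRing Λ)
end

section
/- The Laurent polynomial Δ(t) = t² − t + 1 − t⁻¹ + t⁻² cannot be written in the form c·f(t)·f(t⁻¹) for any nonzero rational constant c and Laurent polynomial f ∈ ℚ[t,t⁻¹]. -/
/-!
At a unit `x` with `x⁻¹ = x`, i.e. `x = ±1`, the value of `c • (f * invert f)` is `c * f(x)²`.
Hence for any such factorization `Δ(-1) / Δ(1)` is a square in `ℚ`; but `Δ(1) = 1` and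
`Δ(-1) = 5`, and `5` is not a rational square.
-/

open LaurentPolynomial

theorem isSquare_mul_sq_div_mul_sq {K : Type*} [Field K] (c a b : K) :
    IsSquare (c * b ^ 2 / (c * a ^ 2)) := by
  rcases eq_or_ne c 0 with rfl | hc
  · simp
  · rw [mul_div_mul_left _ _ hc, ← div_pow]
    exact IsSquare.sq _

namespace LaurentPolynomial

variable {R S : Type*} [CommSemiring R] [CommSemiring S] (f : R →+* S)

theorem eval₂_invert (x : Sˣ) (p : R[T;T⁻¹]) : eval₂ f x (invert p) = eval₂ f x⁻¹ p := by
  induction p using LaurentPolynomial.induction_on' with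
  | add p q hp hq => rw [map_add, map_add, hp, hq, map_add]
  | C_mul_T n a => simp [zpow_neg]

theorem eval₂_smul (x : Sˣ) (c : R) (p : R[T;T⁻¹]) : eval₂ f x (c • p) = f c * eval₂ f x p := by
  rw [smul_eq_C_mul, map_mul, eval₂_C]

theorem eval₂_smul_mul_invert_of_inv_eq_self {x : Sˣ} (hx : x⁻¹ = x) (c : R) (p : R[T;T⁻¹]) :
    eval₂ f x (c • (p * invert p)) = f c * eval₂ f x p ^ 2 := by
  rw [eval₂_smul, map_mul, eval₂_invert, hx, sq]

theorem isSquare_eval₂_div_of_eq_smul_mul_invert {K : Type*} [Field K] (f : R →+* K)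
    {x y : Kˣ} (hx : x⁻¹ = x) (hy : y⁻¹ = y) {q : R[T;T⁻¹]} {c : R} {p : R[T;T⁻¹]}
    (hq : q = c • (p * invert p)) : IsSquare (eval₂ f y q / eval₂ f x q) := by
  rw [hq, eval₂_smul_mul_invert_of_inv_eq_self f hx, eval₂_smul_mul_invert_of_inv_eq_self f hy]
  exact isSquare_mul_sq_div_mul_sq _ _ _

end LaurentPolynomial

/-- The Laurent polynomial `Δ(t) = t² − t + 1 − t⁻¹ + t⁻²` (the Alexander polynomial of
`Σ₂ ⋊_{ℤ₁₀} S¹`) cannot be written in the form `c·f(t)·f(t⁻¹)` for any nonzero rational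
constant `c` and Laurent polynomial `f ∈ ℚ[t,t⁻¹]`. -/
theorem not_exists_symmetric_factorization_deg2 :
    ¬ ∃ (c : ℚ) (f : LaurentPolynomial ℚ), c ≠ 0 ∧
      (T 2 - T 1 + 1 - T (-1) + T (-2) : LaurentPolynomial ℚ) = c • (f * invert f) := by
  rintro ⟨c, f, -, hf⟩
  have hsq := isSquare_eval₂_div_of_eq_smul_mul_invert (RingHom.id ℚ) inv_one inv_neg_one hf
  have hratio : eval₂ (RingHom.id ℚ) (-1) (T 2 - T 1 + 1 - T (-1) + T (-2)) /
      eval₂ (RingHom.id ℚ) 1 (T 2 - T 1 + 1 - T (-1) + T (-2)) = 5 := by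
    norm_num
  rw [hratio] at hsq
  norm_num at hsq
end

section
/- The Laurent polynomial t³ − t² + t − 1 + t⁻¹ − t⁻² + t⁻³ cannot be written as c·f(t)·f(t⁻¹) for any nonzero rational c and f ∈ ℚ[t,t⁻¹]. -/
/-!
At `t = ±1` we have `t⁻¹ = t`, so `c • f(t) f(t⁻¹)` takes the values `c f(1)²` and `c f(-1)²`
there, whose product is the square `(c f(1) f(-1))² ≥ 0`. The given Laurent polynomial takes the
values `1` and `-7`.
-/

open LaurentPolynomial

namespace LaurentPolynomial

section eval₂

variable {R S : Type*} [CommSemiring R] [CommSemiring S] (f : R →+* S)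

theorem eval₂_mul_invert_self {x : Sˣ} (hx : x⁻¹ = x) (p : R[T;T⁻¹]) :
    eval₂ f x (p * invert p) = eval₂ f x p ^ 2 := by
  rw [map_mul, eval₂_invert, hx, sq]

end eval₂

theorem eval₂_one_mul_eval₂_neg_one_smul_mul_invert_nonneg {K : Type*} [Field K]
    [LinearOrder K] [IsStrictOrderedRing K] (c : K) (p : K[T;T⁻¹]) :
    0 ≤ eval₂ (RingHom.id K) 1 (c • (p * invert p)) *
      eval₂ (RingHom.id K) (-1) (c • (p * invert p)) := by
  simp only [smul_eq_C_mul, map_mul (eval₂ _ _) (C c), eval₂_C, RingHom.id_apply,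
    eval₂_mul_invert_self _ (inv_one (G := Kˣ)), eval₂_mul_invert_self _ (inv_neg_one (R := Kˣ))]
  convert sq_nonneg (c * eval₂ (RingHom.id K) 1 p * eval₂ (RingHom.id K) (-1) p) using 1
  ring

end LaurentPolynomial

/-- The Laurent polynomial `t³ − t² + t − 1 + t⁻¹ − t⁻² + t⁻³` (the Alexander polynomial
of `Σ₃ ⋊_{ℤ₁₄} S¹`) cannot be written as `c·f(t)·f(t⁻¹)` for any nonzero rational `c` and
`f ∈ ℚ[t,t⁻¹]`. -/
theorem not_exists_symmetric_factorization_deg3 :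
    ¬ ∃ (c : ℚ) (f : LaurentPolynomial ℚ), c ≠ 0 ∧
      (T 3 - T 2 + T 1 - 1 + T (-1) - T (-2) + T (-3) : LaurentPolynomial ℚ) =
        c • (f * invert f) := by
  rintro ⟨c, f, -, hf⟩
  have h := eval₂_one_mul_eval₂_neg_one_smul_mul_invert_nonneg c f
  rw [← hf] at h
  norm_num at h
end

section
/- For integers b, d, f ≥ 1, the expression (t^{L} − 1)²(t − 1) / ((t^{L/b} − 1)(t^{L/d} − 1)(t^{L/f} − 1)), with L = lcm(b,d,f), is a polynomial in t (i.e. the product of the three denominators divides (t^L − 1)²(t − 1) in ℚ[t]). -/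
/-!
Write `X ^ n - 1` as the product of the cyclotomic polynomials `Φ k` over `k ∣ n`. Each `Φ k`
occurs in the denominator at most three times and only for `k ∣ L`, so at most twice in the
numerator's `(X ^ L - 1) ^ 2`; it occurs three times only if `k` divides `L / b`, `L / d` and
`L / f`, whose gcd is `1` because `L` is the *least* common multiple, and `Φ 1 = X - 1` is the
remaining factor of the numerator.
-/

open Polynomial

theorem Nat.gcd_gcd_lcm_div_eq_one {b d f : ℕ} (h : Nat.lcm (Nat.lcm b d) f ≠ 0) :
    Nat.gcd (Nat.gcd (Nat.lcm (Nat.lcm b d) f / b) (Nat.lcm (Nat.lcm b d) f / d))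
      (Nat.lcm (Nat.lcm b d) f / f) = 1 := by
  set L := Nat.lcm (Nat.lcm b d) f
  set g := Nat.gcd (Nat.gcd (L / b) (L / d)) (L / f)
  have hbL : b ∣ L := (Nat.dvd_lcm_left b d).trans (Nat.dvd_lcm_left _ f)
  have hdL : d ∣ L := (Nat.dvd_lcm_right b d).trans (Nat.dvd_lcm_left _ f)
  have hfL : f ∣ L := Nat.dvd_lcm_right _ f
  have hbg : b * g ∣ L :=
    (Nat.dvd_div_iff_mul_dvd hbL).mp ((Nat.gcd_dvd_left _ _).trans (Nat.gcd_dvd_left _ _))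
  have hdg : d * g ∣ L :=
    (Nat.dvd_div_iff_mul_dvd hdL).mp ((Nat.gcd_dvd_left _ _).trans (Nat.gcd_dvd_right _ _))
  have hfg : f * g ∣ L := (Nat.dvd_div_iff_mul_dvd hfL).mp (Nat.gcd_dvd_right _ _)
  have hgL : g ∣ L := (Dvd.intro_left b rfl).trans hbg
  have hL : L ∣ L / g := Nat.lcm_dvd (Nat.lcm_dvd
    ((Nat.dvd_div_iff_mul_dvd hgL).mpr (by rwa [mul_comm]))
    ((Nat.dvd_div_iff_mul_dvd hgL).mpr (by rwa [mul_comm])))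
    ((Nat.dvd_div_iff_mul_dvd hgL).mpr (by rwa [mul_comm]))
  have hgLL : g * L ∣ 1 * L := by simpa using (Nat.dvd_div_iff_mul_dvd hgL).mp hL
  exact Nat.dvd_one.mp ((Nat.mul_dvd_mul_iff_right (Nat.pos_of_ne_zero h)).mp hgLL)

theorem Nat.divisors_val_add_le {p q r L : ℕ} (hL : L ≠ 0) (hp : p ∣ L) (hq : q ∣ L)
    (hr : r ∣ L) (hpqr : Nat.gcd (Nat.gcd p q) r = 1) :
    p.divisors.val + q.divisors.val + r.divisors.val ≤
      L.divisors.val + L.divisors.val + (1 : ℕ).divisors.val := by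
  refine Multiset.le_iff_count.mpr fun k => ?_
  have hpL : k ∈ _ → k ∈ L.divisors := (Nat.divisors_subset_of_dvd hL hp ·)
  have hqL : k ∈ _ → k ∈ L.divisors := (Nat.divisors_subset_of_dvd hL hq ·)
  have hrL : k ∈ _ → k ∈ L.divisors := (Nat.divisors_subset_of_dvd hL hr ·)
  have hcommon (hkp : k ∈ p.divisors) (hkq : k ∈ q.divisors) (hkr : k ∈ r.divisors) :
      k ∈ (1 : ℕ).divisors := by
    rw [Nat.divisors_one, Finset.mem_singleton, ← Nat.dvd_one, ← hpqr]
    exact Nat.dvd_gcd (Nat.dvd_gcd (Nat.dvd_of_mem_divisors hkp) (Nat.dvd_of_mem_divisors hkq))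
      (Nat.dvd_of_mem_divisors hkr)
  simp only [Multiset.count_add, Multiset.count_eq_of_nodup (Finset.nodup _), Finset.mem_val]
  split_ifs <;> simp_all

theorem Polynomial.X_pow_sub_one_mul_X_pow_sub_one_mul_X_pow_sub_one_dvd {R : Type*}
    [CommRing R] {p q r L : ℕ} (hL : L ≠ 0) (hp : p ∣ L) (hq : q ∣ L) (hr : r ∣ L)
    (hpqr : Nat.gcd (Nat.gcd p q) r = 1) :
    ((X ^ p - 1) * (X ^ q - 1) * (X ^ r - 1) : R[X]) ∣ (X ^ L - 1) ^ 2 * (X - 1) := by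
  have hprod {n : ℕ} (hn : n ∣ L) :
      (X ^ n - 1 : R[X]) = (n.divisors.val.map (cyclotomic · R)).prod := by
    rw [← prod_cyclotomic_eq_X_pow_sub_one (Nat.pos_of_dvd_of_pos hn (Nat.pos_of_ne_zero hL)),
      Finset.prod_eq_multiset_prod]
  rw [hprod hp, hprod hq, hprod hr, sq, hprod dvd_rfl, ← pow_one (X : R[X]), hprod (one_dvd L)]
  simp only [← Multiset.prod_add, ← Multiset.map_add]
  exact Multiset.prod_dvd_prod_of_le (Multiset.map_le_map (Nat.divisors_val_add_le hL hp hq hr hpqr))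

theorem denominator_dvd_of_lcm_general (b d f : ℕ) :
    ((X ^ (Nat.lcm (Nat.lcm b d) f / b) - 1) * (X ^ (Nat.lcm (Nat.lcm b d) f / d) - 1) *
        (X ^ (Nat.lcm (Nat.lcm b d) f / f) - 1) : Polynomial ℚ) ∣
      (X ^ (Nat.lcm (Nat.lcm b d) f) - 1) ^ 2 * (X - 1) := by
  rcases eq_or_ne (Nat.lcm (Nat.lcm b d) f) 0 with hL | hL
  · simp [hL]
  have hbL : b ∣ Nat.lcm (Nat.lcm b d) f := (Nat.dvd_lcm_left b d).trans (Nat.dvd_lcm_left _ f)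
  have hdL : d ∣ Nat.lcm (Nat.lcm b d) f := (Nat.dvd_lcm_right b d).trans (Nat.dvd_lcm_left _ f)
  exact X_pow_sub_one_mul_X_pow_sub_one_mul_X_pow_sub_one_dvd hL (Nat.div_dvd_of_dvd hbL)
    (Nat.div_dvd_of_dvd hdL) (Nat.div_dvd_of_dvd (Nat.dvd_lcm_right _ f))
    (Nat.gcd_gcd_lcm_div_eq_one hL)

/-- For integers `b, d, f ≥ 1` and `L = lcm(b,d,f)`, the product
`(t^{L/b} − 1)(t^{L/d} − 1)(t^{L/f} − 1)` divides `(t^L − 1)²(t − 1)` in `ℚ[t]`; that is,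
`(t^L − 1)²(t − 1) / ((t^{L/b} − 1)(t^{L/d} − 1)(t^{L/f} − 1))` is a polynomial in `t`. -/
theorem denominator_dvd_of_lcm (b d f : ℕ) (hb : 1 ≤ b) (hd : 1 ≤ d) (hf : 1 ≤ f) :
    ((X ^ (Nat.lcm (Nat.lcm b d) f / b) - 1) * (X ^ (Nat.lcm (Nat.lcm b d) f / d) - 1) *
        (X ^ (Nat.lcm (Nat.lcm b d) f / f) - 1) : Polynomial ℚ) ∣
      (X ^ (Nat.lcm (Nat.lcm b d) f) - 1) ^ 2 * (X - 1) :=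
  denominator_dvd_of_lcm_general b d f
end
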